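/- Construction of a homotopy basis: Let Σ be a terminating generalised 2-polygraph that is closed under congruence, cancels inverses (for every step s : x ⤳ y there are rewrite zig-zags s·s⁻¹ ⇔* ε_x and s⁻¹·s ⇔* ε_y), cancels empty closed zig-zags (every closed zig-zag of length 0 at x can be rewritten to the trivial sequence ε_x), and admits a Winkler–Buchberger structure. Then Σ has a homotopy basis: for all parallel reduction zig-zags u, v : x ⇜⤳* y there is a rewrite zig-zag u ⇔* v. -/

import Mathlib

universe u v w

/-- Reduction sequences over a proof-relevant relation `R`: the inductive
reflexive-transitive closure. -/
inductive RSeq {A : Type u} (R : A → A → Type v) : A → A → Type (max u v)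
  | nil (x : A) : RSeq R x x
  | cons {x y z : A} : R x y → RSeq R y z → RSeq R x z

namespace RSeq

variable {A : Type u} {R : A → A → Type v}

/-- Concatenation of sequences. -/
def comp : ∀ {x y z : A}, RSeq R x y → RSeq R y z → RSeq R x z
  | _, _, _, .nil _, t => t
  | _, _, _, .cons s u, t => .cons s (comp u t)

/-- The length (number of steps) of a sequence. -/
def length : ∀ {x y : A}, RSeq R x y → Nat
  | _, _, .nil _ => 0
  | _, _, .cons _ u => u.length + 1

/-- The list of all objects visited by a sequence (including endpoints). -/
def objs : ∀ {x y : A}, RSeq R x y → List A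
  | x, _, .nil _ => [x]
  | x, _, .cons _ u => x :: objs u

/-- The inner (intermediate) objects of a sequence: all objects except the
first and the last. -/
def inner {x y : A} (u : RSeq R x y) : List A := (objs u).tail.dropLast

end RSeq

/-- The symmetric closure of a proof-relevant relation. -/
def RSym {A : Type u} (R : A → A → Type v) (x y : A) : Type v := Sum (R x y) (R y x)

/-- Inversion of a single symmetric-closure step. -/
def RSym.inv {A : Type u} {R : A → A → Type v} {x y : A} : RSym R x y → RSym R y x
  | .inl s => .inr s
  | .inr s => .inl s

/-- Reduction zig-zags: the symmetric-reflexive-transitive closure of `R`. -/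
abbrev ZigZag {A : Type u} (R : A → A → Type v) (x y : A) : Type (max u v) :=
  RSeq (RSym R) x y

/-- Inversion of a zig-zag. -/
def ZigZag.inv {A : Type u} {R : A → A → Type v} : ∀ {x y : A}, ZigZag R x y → ZigZag R y x
  | _, _, .nil x => .nil x
  | _, _, .cons s u => RSeq.comp (ZigZag.inv u) (.cons (RSym.inv s) (.nil _))

/-- The embedding of reduction sequences into zig-zags as positive zig-zags. -/
def RSeq.fwd {A : Type u} {R : A → A → Type v} : ∀ {x y : A}, RSeq R x y → ZigZag R x y
  | _, _, .nil x => .nil x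
  | _, _, .cons s u => .cons (Sum.inl s) (RSeq.fwd u)

/-- The local peak `y ⬿ x ⤳ z` determined by two reduction steps out of `x`,
viewed as a zig-zag from `y` to `z`. -/
def ZigZag.peak {A : Type u} {R : A → A → Type v} {x y z : A}
    (s : R x y) (t : R x z) : ZigZag R y z :=
  .cons (Sum.inr s) (.cons (Sum.inl t) (.nil z))

/-- Rewrite zig-zags `u ⇔* v` between parallel reduction zig-zags, relative to a
family `R2` of rewrite steps: the symmetric-reflexive-transitive closure of `R2`. -/
abbrev RW {A : Type u} {R : A → A → Type v}
    (R2 : ∀ (x y : A), ZigZag R x y → ZigZag R x y → Type w)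
    {x y : A} (u v : ZigZag R x y) : Type (max u v w) :=
  RSeq (RSym (R2 x y)) u v


/-!
A rewrite zig-zag `u ⇔* v` is assembled from `u · v⁻¹ ⇔* ε` and `v⁻¹ · v ⇔* ε`, so everything
reduces to contracting closed zig-zags. This goes by Noetherian induction on the multiset of
objects visited, ordered by the multiset extension of `>`. A closed zig-zag either contains a
local peak, which the Winkler–Buchberger structure replaces by a zig-zag through objects below
its apex, or it is a valley `d₁ · d₂⁻¹`. In a valley `d₂` is empty when `d₁` is (termination
forbids cycles), and otherwise the first step `s` of `d₁` can be rotated to the end: this trades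
one visit of its source for one of its target, and `s · s⁻¹ ⇔* ε` carries the contraction back.
-/

open Relation

namespace RSeq

variable {A : Type u} {R : A → A → Type v}

@[simp]
theorem comp_nil : ∀ {x y : A} (u : RSeq R x y), u.comp (.nil y) = u
  | _, _, .nil _ => rfl
  | _, _, .cons s u => congrArg (cons s) (comp_nil u)

theorem comp_assoc : ∀ {x y z w : A} (u : RSeq R x y) (v : RSeq R y z) (t : RSeq R z w),
    (u.comp v).comp t = u.comp (v.comp t)
  | _, _, _, _, .nil _, _, _ => rfl
  | _, _, _, _, .cons s u, v, t => congrArg (cons s) (comp_assoc u v t)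

theorem fwd_comp : ∀ {x y z : A} (u : RSeq R x y) (v : RSeq R y z),
    (u.comp v).fwd = u.fwd.comp v.fwd
  | _, _, _, .nil _, _ => rfl
  | _, _, _, .cons s u, v => by simp only [comp, fwd, fwd_comp u v]

theorem objs_ne_nil {x y : A} (u : RSeq R x y) : u.objs ≠ [] := by
  cases u <;> simp [objs]

theorem objs_eq_dropLast_append : ∀ {x y : A} (u : RSeq R x y), u.objs = u.objs.dropLast ++ [y]
  | _, _, .nil _ => rfl
  | _, _, .cons _ u => by
    rw [objs, objs_eq_dropLast_append u, ← List.cons_append, List.dropLast_concat]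

theorem objs_comp : ∀ {x y z : A} (u : RSeq R x y) (v : RSeq R y z),
    (u.comp v).objs = u.objs.dropLast ++ v.objs
  | _, _, _, .nil _, _ => rfl
  | _, _, _, .cons s u, v => by
    rw [comp, objs, objs, objs_comp u v, List.dropLast_cons_of_ne_nil (objs_ne_nil u),
      List.cons_append]

theorem not_cycle_of_wellFounded {r : A → A → Prop} (hwf : WellFounded fun a b => r b a)
    (hR : ∀ {x y : A}, R x y → r x y) {x y : A} (s : R x y) (d : RSeq R y x) : False := by
  induction hwf.apply y generalizing x with
  | intro y _ ih =>
    cases d with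
    | nil => exact ih y (hR s) s (.nil y)
    | cons t d => exact ih _ (hR t) t (d.comp (.cons s (.nil y)))

end RSeq

namespace ZigZag

variable {A : Type u} {R : A → A → Type v}

theorem inv_comp : ∀ {x y z : A} (u : ZigZag R x y) (v : ZigZag R y z),
    inv (u.comp v) = v.inv.comp u.inv
  | _, _, _, .nil _, v => (RSeq.comp_nil v.inv).symm
  | _, _, _, .cons s u, v => by
    simp only [RSeq.comp, inv, inv_comp u v, RSeq.comp_assoc]

theorem eq_valley_or_eq_peak : ∀ {y z : A} (w : ZigZag R y z),
    (∃ (n : A) (d₁ : RSeq R y n) (d₂ : RSeq R z n), w = d₁.fwd.comp d₂.fwd.inv) ∨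
    ∃ (a b c : A) (s : R a b) (t : R a c) (l : ZigZag R y b) (r : ZigZag R c z),
      w = l.comp ((peak s t).comp r)
  | _, _, .nil x => .inl ⟨x, .nil x, .nil x, rfl⟩
  | _, _, .cons (.inl s) w => by
    rcases eq_valley_or_eq_peak w with ⟨n, d₁, d₂, rfl⟩ | ⟨a, b, c, s', t, l, r, rfl⟩
    · exact .inl ⟨n, .cons s d₁, d₂, rfl⟩
    · exact .inr ⟨a, b, c, s', t, .cons (.inl s) l, r, rfl⟩
  | _, _, .cons (.inr s) w => by
    rcases eq_valley_or_eq_peak w with ⟨n, d₁, d₂, rfl⟩ | ⟨a, b, c, s', t, l, r, rfl⟩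
    · cases d₁ with
      | nil =>
        refine .inl ⟨_, .nil _, d₂.comp (.cons s (.nil _)), ?_⟩
        rw [RSeq.fwd_comp, inv_comp]
        rfl
      | cons t d₁ => exact .inr ⟨_, _, _, s, t, .nil _, d₁.fwd.comp d₂.fwd.inv, rfl⟩
    · exact .inr ⟨a, b, c, s', t, .cons (.inr s) l, r, rfl⟩

variable {gt : A → A → Prop}

theorem cutExpand_objs_rotate (hR : ∀ {x y : A}, R x y → gt x y) {x x₁ : A} (s : R x x₁)
    (m : ZigZag R x₁ x) :
    CutExpand (fun a b => gt b a) ((m.comp (.cons (.inl s) (.nil x₁))).objs : Multiset A)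
      (RSeq.cons (.inl s) m).objs := by
  refine ⟨{x₁}, x, by simpa using hR s, ?_⟩
  simp only [RSeq.objs_comp, RSeq.objs]
  rw [RSeq.objs_eq_dropLast_append m]
  simp only [List.dropLast_concat, ← Multiset.coe_add, ← Multiset.cons_coe,
    ← Multiset.singleton_add]
  abel

theorem transGen_cutExpand_objs_peak {a b c y z : A}
    (s : R a b) (t : R a c) (p : ZigZag R b c) (hp : ∀ m ∈ p.inner, gt a m)
    (l : ZigZag R y b) (r : ZigZag R c z) :
    TransGen (CutExpand fun a b => gt b a) ((l.comp (p.comp r)).objs : Multiset A)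
      (l.comp ((peak s t).comp r)).objs := by
  have key : TransGen (CutExpand fun a b => gt b a) (p.objs.dropLast : Multiset A) {b, a} := by
    cases p with
    | nil =>
      refine .head (cutExpand_zero (x := b)) (.single ?_)
      simpa using (cutExpand_add_left {b}).2 (cutExpand_zero (r := fun a b => gt b a) (x := a))
    | cons _ p =>
      refine .single ?_
      rw [RSeq.objs, List.dropLast_cons_of_ne_nil (RSeq.objs_ne_nil p), ← Multiset.cons_coe,
        ← Multiset.singleton_add, Multiset.insert_eq_cons, ← Multiset.singleton_add]
      exact (cutExpand_add_left {b}).2 (cutExpand_singleton hp)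
  have lifted : TransGen (CutExpand fun a b => gt b a) _ _ :=
    key.lift (fun M => (l.objs.dropLast : Multiset A) + (M + r.objs)) fun _ _ h =>
      (cutExpand_add_left _).2 ((cutExpand_add_right _).2 h)
  simpa [RSeq.objs_comp, peak, RSeq.comp, RSeq.objs] using lifted

end ZigZag

section Homotopy

variable {A : Type u} {R : A → A → Type v}

def ZigZag.Homotopic (R2 : ∀ x y : A, ZigZag R x y → ZigZag R x y → Type w) {x y : A}
    (u v : ZigZag R x y) : Prop :=
  Nonempty (RW R2 u v)

abbrev CongrClosed (R2 : ∀ x y : A, ZigZag R x y → ZigZag R x y → Type w) :=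
  ∀ {x y y' z : A} (u : ZigZag R x y) (v : ZigZag R y' z) {p q : ZigZag R y y'},
    RW R2 p q → RW R2 (u.comp (p.comp v)) (u.comp (q.comp v))

namespace ZigZag.Homotopic

variable {R2 : ∀ x y : A, ZigZag R x y → ZigZag R x y → Type w} {x y z : A}

theorem symm {u v : ZigZag R x y} : Homotopic R2 u v → Homotopic R2 v u
  | ⟨h⟩ => ⟨ZigZag.inv h⟩

theorem trans {u v t : ZigZag R x y} : Homotopic R2 u v → Homotopic R2 v t → Homotopic R2 u t
  | ⟨h⟩, ⟨h'⟩ => ⟨h.comp h'⟩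

instance : @Trans (ZigZag R x y) _ _ (Homotopic R2) (Homotopic R2) (Homotopic R2) := ⟨trans⟩

theorem whisker (hc : CongrClosed R2) {y' : A} (u : ZigZag R x y) (v : ZigZag R y' z)
    {p q : ZigZag R y y'} :
    Homotopic R2 p q → Homotopic R2 (u.comp (p.comp v)) (u.comp (q.comp v))
  | ⟨h⟩ => ⟨hc u v h⟩

theorem comp_left (hc : CongrClosed R2) (u : ZigZag R x y) {p q : ZigZag R y z}
    (h : Homotopic R2 p q) : Homotopic R2 (u.comp p) (u.comp q) := by
  simpa only [RSeq.comp_nil] using whisker hc u (.nil z) h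

theorem comp_right (hc : CongrClosed R2) {p q : ZigZag R x y} (h : Homotopic R2 p q)
    (v : ZigZag R y z) : Homotopic R2 (p.comp v) (q.comp v) :=
  whisker hc (.nil x) v h

end ZigZag.Homotopic

end Homotopy

namespace ZigZag

variable {A : Type u} {R : A → A → Type v}
variable {R2 : ∀ x y : A, ZigZag R x y → ZigZag R x y → Type w}

theorem homotopic_nil_of_rotate (hc : CongrClosed R2)
    (rinv : ∀ {x y : A} (s : R x y),
      RW R2 (RSeq.cons (Sum.inl s) (RSeq.cons (Sum.inr s) (RSeq.nil x))) (RSeq.nil x))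
    {x x₁ : A} (s : R x x₁) (m : ZigZag R x₁ x)
    (h : Homotopic R2 (m.comp (.cons (.inl s) (.nil x₁))) (.nil x₁)) :
    Homotopic R2 (.cons (.inl s) m) (.nil x) := by
  let e : ZigZag R x x₁ := .cons (.inl s) (.nil x₁)
  let e' : ZigZag R x₁ x := .cons (.inr s) (.nil x)
  have hm : Homotopic R2 m e' :=
    calc m = m.comp (.nil x) := (RSeq.comp_nil m).symm
      Homotopic R2 _ (m.comp (e.comp e')) := Homotopic.comp_left hc m ⟨inv (rinv s)⟩
      _ = (m.comp e).comp e' := (RSeq.comp_assoc m e e').symm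
      Homotopic R2 _ e' := Homotopic.comp_right hc h e'
  calc RSeq.cons (.inl s) m = e.comp m := rfl
    Homotopic R2 _ (e.comp e') := Homotopic.comp_left hc e hm
    Homotopic R2 _ (.nil x) := ⟨rinv s⟩

theorem homotopic_nil_of_closed {gt : A → A → Prop} (hwf : WellFounded fun a b => gt b a)
    (hR : ∀ {x y : A}, R x y → gt x y) (hc : CongrClosed R2)
    (rinv : ∀ {x y : A} (s : R x y),
      RW R2 (RSeq.cons (Sum.inl s) (RSeq.cons (Sum.inr s) (RSeq.nil x))) (RSeq.nil x))
    (wb : ∀ {x y z : A} (s : R x y) (t : R x z),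
      Σ (p : ZigZag R y z), PProd (∀ m ∈ RSeq.inner p, gt x m) (RW R2 (peak s t) p))
    {x : A} (w : ZigZag R x x) : Homotopic R2 w (.nil x) := by
  induction hM : (w.objs : Multiset A) using hwf.cutExpand.transGen.induction generalizing x with
  | h M ih =>
  subst hM
  rcases w.eq_valley_or_eq_peak with ⟨n, d₁, d₂, rfl⟩ | ⟨a, b, c, s, t, l, r, rfl⟩
  · cases d₁ with
    | nil =>
      cases d₂ with
      | nil => exact ⟨.nil _⟩
      | cons t d₂ => exact (RSeq.not_cycle_of_wellFounded hwf hR t d₂).elim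
    | cons s d₁ =>
      exact homotopic_nil_of_rotate hc rinv s _
        (ih _ (.single (cutExpand_objs_rotate @hR s _)) _ rfl)
  · obtain ⟨p, hp, hpeak⟩ := wb s t
    exact (Homotopic.whisker hc l r ⟨hpeak⟩).trans
      (ih _ (transGen_cutExpand_objs_peak s t p hp l r) _ rfl)

end ZigZag

theorem homotopy_basis_general {A : Type u} (R : A → A → Type v)
    (R2 : ∀ (x y : A), ZigZag R x y → ZigZag R x y → Type w)
    -- terminating: a transitive Noetherian order `>` compatible with reduction steps
    (gt : A → A → Prop)
    (gt_noeth : WellFounded (fun a b => gt b a))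
    (step_gt : ∀ {x y : A}, R x y → gt x y)
    -- closed under congruence
    (congrClosed : ∀ {x y y' z : A} (u : ZigZag R x y) (v : ZigZag R y' z)
      {p q : ZigZag R y y'}, RW R2 p q →
      RW R2 (u.comp (p.comp v)) (u.comp (q.comp v)))
    -- cancels inverses: `s · s⁻¹ ⇔* ε_x` and `s⁻¹ · s ⇔* ε_y` for every step `s : x ⤳ y`
    (rinv : ∀ {x y : A} (s : R x y),
      RW R2 (RSeq.cons (Sum.inl s) (RSeq.cons (Sum.inr s) (RSeq.nil x))) (RSeq.nil x))
    -- Winkler–Buchberger structure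
    (wb : ∀ {x y z : A} (s : R x y) (t : R x z),
      Σ (p : ZigZag R y z),
        PProd (∀ m ∈ RSeq.inner p, gt x m) (RW R2 (ZigZag.peak s t) p)) :
    ∀ {x y : A} (u v : ZigZag R x y), Nonempty (RW R2 u v) := by
  have contract {z : A} (w : ZigZag R z z) : ZigZag.Homotopic R2 w (.nil z) :=
    ZigZag.homotopic_nil_of_closed gt_noeth @step_gt @congrClosed @rinv @wb w
  intro x y u v
  calc u = u.comp (.nil y) := (RSeq.comp_nil u).symm
    ZigZag.Homotopic R2 _ (u.comp (v.inv.comp v)) :=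
      .comp_left @congrClosed u (contract _).symm
    _ = (u.comp v.inv).comp v := (RSeq.comp_assoc _ _ _).symm
    ZigZag.Homotopic R2 _ v := .comp_right @congrClosed (contract _) v

/-- Construction of a homotopy basis: a terminating generalised
2-polygraph which is closed under congruence, cancels inverses, cancels empty
closed zig-zags, and admits a Winkler–Buchberger structure has a homotopy basis:
for all parallel reduction zig-zags `u v : x ⇜⤳* y` there is a rewrite zig-zag
`u ⇔* v`. -/
theorem homotopy_basis {A : Type u} (R : A → A → Type v)
    (R2 : ∀ (x y : A), ZigZag R x y → ZigZag R x y → Type w)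
    -- terminating: a transitive Noetherian order `>` compatible with reduction steps
    (gt : A → A → Prop) (gt_trans : Transitive gt)
    (gt_noeth : WellFounded (fun a b => gt b a))
    (step_gt : ∀ {x y : A}, R x y → gt x y)
    -- closed under congruence
    (congrClosed : ∀ {x y y' z : A} (u : ZigZag R x y) (v : ZigZag R y' z)
      {p q : ZigZag R y y'}, RW R2 p q →
      RW R2 (u.comp (p.comp v)) (u.comp (q.comp v)))
    -- cancels inverses: `s · s⁻¹ ⇔* ε_x` and `s⁻¹ · s ⇔* ε_y` for every step `s : x ⤳ y`
    (rinv : ∀ {x y : A} (s : R x y),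
      RW R2 (RSeq.cons (Sum.inl s) (RSeq.cons (Sum.inr s) (RSeq.nil x))) (RSeq.nil x))
    (linv : ∀ {x y : A} (s : R x y),
      RW R2 (RSeq.cons (Sum.inr s) (RSeq.cons (Sum.inl s) (RSeq.nil y))) (RSeq.nil y))
    -- cancels empty closed zig-zags
    (cancelEmpty : ∀ {x : A} (u : ZigZag R x x), RSeq.length u = 0 → RW R2 u (RSeq.nil x))
    -- Winkler–Buchberger structure
    (wb : ∀ {x y z : A} (s : R x y) (t : R x z),
      Σ (p : ZigZag R y z),
        PProd (∀ m ∈ RSeq.inner p, gt x m) (RW R2 (ZigZag.peak s t) p)) :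
    ∀ {x y : A} (u v : ZigZag R x y), Nonempty (RW R2 u v) :=
  homotopy_basis_general R R2 gt gt_noeth step_gt congrClosed rinv wb
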